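/- Let ν be a sigma-finite measure on (0,∞) with ∫₀^∞ min(x^{-1/2}, x^{-3/2}) ν(dx) < ∞. Then for every τ > 0, ∫₀^∞ √((1 - 2e^{-τx}(τx+1)(1 - τx e^{-τx}) + e^{-2τx})/x³) ν(dx) < ∞, and moreover the integrand satisfies the pointwise bound √((1 - 2e^{-τx}(1+τx) + 2τx e^{-2τx}(1+τx) + e^{-2τx})/(4x³)) ≤ √2 · max(τ,1) · min(x^{-1/2}, x^{-3/2}). -/

import Mathlib

/-!
With `u = τ x`, both numerators equal `(1 - (1 + u) e^{-u})² + (u e^{-u})²`. For `u ≥ 0` each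
square lies in `[0, min 1 u²]`, because `1 - u ≤ e^{-u}` and `1 + u ≤ e^u`. Hence the numerator
is at most `2 min 1 (τ x)² ≤ 2 (max τ 1)² min 1 x²`, and dividing by `x³` bounds the integrand by
a multiple of `min (x^{-1/2}) (x^{-3/2})`; finiteness of the integral follows by comparison.
-/

open Real MeasureTheory

lemma one_sub_one_add_mul_exp_neg_nonneg (u : ℝ) : 0 ≤ 1 - (1 + u) * exp (-u) := by
  have h := mul_le_mul_of_nonneg_right (add_one_le_exp u) (exp_pos (-u)).le
  rw [← exp_add, add_neg_cancel, exp_zero, add_comm] at h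
  linarith

lemma one_sub_one_add_mul_exp_neg_le_one {u : ℝ} (hu : -1 ≤ u) :
    1 - (1 + u) * exp (-u) ≤ 1 := by
  nlinarith [exp_pos (-u)]

lemma one_sub_one_add_mul_exp_neg_le_sq {u : ℝ} (hu : -1 ≤ u) :
    1 - (1 + u) * exp (-u) ≤ u ^ 2 := by
  nlinarith [add_one_le_exp (-u)]

lemma mul_exp_neg_le_one (u : ℝ) : u * exp (-u) ≤ 1 := by
  have h := mul_le_mul_of_nonneg_right (add_one_le_exp u) (exp_pos (-u)).le
  rw [← exp_add, add_neg_cancel, exp_zero] at h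
  nlinarith [exp_pos (-u)]

/-- The numerator of the stationary variance integrand, as a function of `u = τ x`. -/
noncomputable def ouVarianceNumerator (u : ℝ) : ℝ :=
  (1 - (1 + u) * exp (-u)) ^ 2 + (u * exp (-u)) ^ 2

lemma exp_neg_two_mul_mul (τ x : ℝ) : exp (-(2 * τ * x)) = exp (-(τ * x)) ^ 2 := by
  rw [sq, ← exp_add]
  ring_nf

lemma ouVarianceNumerator_eq (τ x : ℝ) :
    1 - 2 * exp (-(τ * x)) * (1 + τ * x) + 2 * τ * x * exp (-(2 * τ * x)) * (1 + τ * x) +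
      exp (-(2 * τ * x)) = ouVarianceNumerator (τ * x) := by
  rw [ouVarianceNumerator, exp_neg_two_mul_mul]
  ring

lemma ouVarianceNumerator_eq' (τ x : ℝ) :
    1 - 2 * exp (-(τ * x)) * (τ * x + 1) * (1 - τ * x * exp (-(τ * x))) +
      exp (-(2 * τ * x)) = ouVarianceNumerator (τ * x) := by
  rw [ouVarianceNumerator, exp_neg_two_mul_mul]
  ring

lemma ouVarianceNumerator_le_two {u : ℝ} (hu : 0 ≤ u) : ouVarianceNumerator u ≤ 2 := by
  have h₁ := one_sub_one_add_mul_exp_neg_nonneg u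
  have h₂ := one_sub_one_add_mul_exp_neg_le_one (by linarith : -1 ≤ u)
  have h₃ := mul_exp_neg_le_one u
  have h₄ : 0 ≤ u * exp (-u) := by positivity
  rw [ouVarianceNumerator]
  nlinarith

lemma ouVarianceNumerator_le_two_mul_sq {u : ℝ} (hu : 0 ≤ u) :
    ouVarianceNumerator u ≤ 2 * u ^ 2 := by
  set a := 1 - (1 + u) * exp (-u)
  have ha : 0 ≤ a := one_sub_one_add_mul_exp_neg_nonneg u
  have h₁ : a ^ 2 ≤ u ^ 2 := calc
    a ^ 2 ≤ a := by nlinarith [one_sub_one_add_mul_exp_neg_le_one (by linarith : -1 ≤ u)]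
    _ ≤ u ^ 2 := one_sub_one_add_mul_exp_neg_le_sq (by linarith)
  have h₂ : (u * exp (-u)) ^ 2 ≤ u ^ 2 := by
    gcongr
    exact mul_le_of_le_one_right hu (exp_le_one_iff.mpr (by linarith))
  rw [ouVarianceNumerator]
  linarith

lemma ouVarianceNumerator_div_le {τ x : ℝ} (hτ : 0 < τ) (hx : 0 < x) :
    ouVarianceNumerator (τ * x) / (4 * x ^ 3) ≤ 2 * max τ 1 ^ 2 * min x⁻¹ (x ^ 3)⁻¹ := by
  have hu : 0 ≤ τ * x := by positivity
  rw [div_le_iff₀ (by positivity)]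
  rcases le_total x 1 with hx1 | hx1
  · rw [min_eq_left (inv_anti₀ (by positivity) (pow_le_of_le_one hx.le hx1 (by norm_num)))]
    have hτM : τ ^ 2 ≤ max τ 1 ^ 2 := pow_le_pow_left₀ hτ.le (le_max_left τ 1) 2
    calc ouVarianceNumerator (τ * x) ≤ 2 * (τ * x) ^ 2 := ouVarianceNumerator_le_two_mul_sq hu
      _ ≤ 2 * max τ 1 ^ 2 * x ^ 2 := by nlinarith [sq_nonneg x]
      _ ≤ 2 * max τ 1 ^ 2 * x⁻¹ * (4 * x ^ 3) := by
        field_simp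
        nlinarith [sq_nonneg x, sq_nonneg (max τ 1)]
  · rw [min_eq_right (inv_anti₀ hx (le_self_pow₀ hx1 (by norm_num)))]
    have hM : 1 ≤ max τ 1 ^ 2 := one_le_pow₀ (le_max_right τ 1)
    calc ouVarianceNumerator (τ * x) ≤ 2 := ouVarianceNumerator_le_two hu
      _ ≤ 2 * max τ 1 ^ 2 * (x ^ 3)⁻¹ * (4 * x ^ 3) := by
        field_simp
        nlinarith

lemma sq_min_rpow_neg_half_rpow_neg_three_halves {x : ℝ} (hx : 0 < x) :
    min (x ^ (-(1 / 2) : ℝ)) (x ^ (-(3 / 2) : ℝ)) ^ 2 = min x⁻¹ (x ^ 3)⁻¹ := by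
  have hsq (n : ℕ) : (x ^ (-(n / 2 : ℝ))) ^ 2 = (x ^ n)⁻¹ := by
    rw [← rpow_natCast, ← rpow_mul hx.le, ← rpow_natCast, ← rpow_neg hx.le]
    norm_num
  rcases le_total x 1 with hx1 | hx1
  · rw [min_eq_left (rpow_le_rpow_of_exponent_ge hx hx1 (by norm_num)),
      min_eq_left (inv_anti₀ (by positivity) (pow_le_of_le_one hx.le hx1 (by norm_num)))]
    simpa using hsq 1
  · rw [min_eq_right (rpow_le_rpow_of_exponent_le hx1 (by norm_num)),
      min_eq_right (inv_anti₀ hx (le_self_pow₀ hx1 (by norm_num)))]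
    exact_mod_cast hsq 3

lemma sqrt_ouVarianceNumerator_div_le {τ x : ℝ} (hτ : 0 < τ) (hx : 0 < x) :
    √(ouVarianceNumerator (τ * x) / (4 * x ^ 3)) ≤
      √2 * max τ 1 * min (x ^ (-(1 / 2) : ℝ)) (x ^ (-(3 / 2) : ℝ)) := by
  have hm : 0 ≤ min (x ^ (-(1 / 2) : ℝ)) (x ^ (-(3 / 2) : ℝ)) :=
    le_min (rpow_nonneg hx.le _) (rpow_nonneg hx.le _)
  rw [sqrt_le_left (by positivity), mul_pow, mul_pow, sq_sqrt zero_le_two,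
    sq_min_rpow_neg_half_rpow_neg_three_halves hx]
  exact ouVarianceNumerator_div_le hτ hx

lemma setLIntegral_ofReal_lt_top_of_le_const_mul {α : Type*} [MeasurableSpace α]
    {μ : Measure α} {s : Set α} (hs : MeasurableSet s) {f g : α → ℝ} {C : ℝ}
    (hC : 0 ≤ C) (hfg : ∀ x ∈ s, f x ≤ C * g x)
    (hg : ∫⁻ x in s, ENNReal.ofReal (g x) ∂μ < ⊤) :
    ∫⁻ x in s, ENNReal.ofReal (f x) ∂μ < ⊤ := by
  calc ∫⁻ x in s, ENNReal.ofReal (f x) ∂μ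
      ≤ ∫⁻ x in s, ENNReal.ofReal C * ENNReal.ofReal (g x) ∂μ := by
        refine setLIntegral_mono' hs fun x hx => ?_
        rw [← ENNReal.ofReal_mul hC]
        exact ENNReal.ofReal_le_ofReal (hfg x hx)
    _ < ⊤ := by
      rw [lintegral_const_mul' _ _ ENNReal.ofReal_ne_top]
      exact ENNReal.mul_lt_top ENNReal.ofReal_lt_top hg

theorem stmt_12_general (ν : Measure ℝ)
    (h : ∫⁻ x in Set.Ioi (0 : ℝ),
        ENNReal.ofReal (min (x ^ (-(1 / 2) : ℝ)) (x ^ (-(3 / 2) : ℝ))) ∂ν < ⊤) :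
    ∀ τ > (0 : ℝ),
      (∫⁻ x in Set.Ioi (0 : ℝ),
        ENNReal.ofReal
          (Real.sqrt ((1 - 2 * Real.exp (-(τ * x)) * (τ * x + 1) *
              (1 - τ * x * Real.exp (-(τ * x))) + Real.exp (-(2 * τ * x))) / x ^ 3)) ∂ν < ⊤) ∧
      ∀ x > (0 : ℝ),
        Real.sqrt ((1 - 2 * Real.exp (-(τ * x)) * (1 + τ * x) +
              2 * τ * x * Real.exp (-(2 * τ * x)) * (1 + τ * x) +
              Real.exp (-(2 * τ * x))) / (4 * x ^ 3)) ≤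
          Real.sqrt 2 * max τ 1 * min (x ^ (-(1 / 2) : ℝ)) (x ^ (-(3 / 2) : ℝ)) := by
  intro τ hτ
  refine ⟨?_, fun x hx => ?_⟩
  · refine setLIntegral_ofReal_lt_top_of_le_const_mul measurableSet_Ioi
      (C := 2 * (√2 * max τ 1)) (by positivity) (fun x hx => ?_) h
    have hx : 0 < x := hx
    have hsplit : ouVarianceNumerator (τ * x) / x ^ 3 =
        2 ^ 2 * (ouVarianceNumerator (τ * x) / (4 * x ^ 3)) := by
      field_simp
      ring
    rw [ouVarianceNumerator_eq', hsplit, sqrt_mul (by positivity), sqrt_sq zero_le_two,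
      mul_assoc]
    gcongr
    exact sqrt_ouVarianceNumerator_div_le hτ hx
  · rw [ouVarianceNumerator_eq]
    exact sqrt_ouVarianceNumerator_div_le hτ hx

theorem stmt_12 (ν : Measure ℝ) [SigmaFinite ν]
    (h : ∫⁻ x in Set.Ioi (0 : ℝ),
        ENNReal.ofReal (min (x ^ (-(1 / 2) : ℝ)) (x ^ (-(3 / 2) : ℝ))) ∂ν < ⊤) :
    ∀ τ > (0 : ℝ),
      (∫⁻ x in Set.Ioi (0 : ℝ),
        ENNReal.ofReal
          (Real.sqrt ((1 - 2 * Real.exp (-(τ * x)) * (τ * x + 1) *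
              (1 - τ * x * Real.exp (-(τ * x))) + Real.exp (-(2 * τ * x))) / x ^ 3)) ∂ν < ⊤) ∧
      ∀ x > (0 : ℝ),
        Real.sqrt ((1 - 2 * Real.exp (-(τ * x)) * (1 + τ * x) +
              2 * τ * x * Real.exp (-(2 * τ * x)) * (1 + τ * x) +
              Real.exp (-(2 * τ * x))) / (4 * x ^ 3)) ≤
          Real.sqrt 2 * max τ 1 * min (x ^ (-(1 / 2) : ℝ)) (x ^ (-(3 / 2) : ℝ)) :=
  stmt_12_general ν h
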